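/- Let X : Ω → ℝⁿ and ε : Ω → ℝᵐ be square-integrable random vectors on a probability space, with X and ε independent and E[ε] = 0. Let F ∈ ℝ^{m×n}, and let L_X be a matrix with E[X Xᵀ] = L_X L_Xᵀ. Let M be a best rank-≤r approximation of F L_X in the Frobenius norm, and set Â = M L_X†. Then rank(Â) ≤ r and for every A ∈ ℝ^{m×n} with rank(A) ≤ r, E‖Â X − (F X + ε)‖₂² ≤ E‖A X − (F X + ε)‖₂². -/

import Mathlib

/-!
For every matrix `B`, `E‖B X − (F X + ε)‖² = ‖(B − F) L_X‖_F² + E‖ε‖²`: independence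
and `E[ε] = 0` kill the cross moment `E[X εᵀ]`, and `E[X Xᵀ] = L_X L_Xᵀ`. So it suffices
to compare `‖(Â − F) L_X‖_F` with `‖(A − F) L_X‖_F`. As `P = L_X† L_X` is an orthogonal
projection with `F L_X P = F L_X`, we have `(Â − F) L_X = (M − F L_X) P`, whose norm is at
most `‖F L_X − M‖_F ≤ ‖F L_X − A L_X‖_F`, the last step because `A L_X` has rank `≤ r`.
-/

open Matrix MeasureTheory

/-- Second (cross-)moment matrix `E[X Yᵀ]` of two random vectors. -/
noncomputable def secondMoment {Ω : Type} [MeasurableSpace Ω] (μ : Measure Ω)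
    {n m : ℕ} (X : Ω → Fin n → ℝ) (Y : Ω → Fin m → ℝ) : Matrix (Fin n) (Fin m) ℝ :=
  Matrix.of fun i j => ∫ ω, X ω i * Y ω j ∂μ

/-- Frobenius norm of a real matrix. -/
noncomputable def frob {m n : ℕ} (A : Matrix (Fin m) (Fin n) ℝ) : ℝ :=
  Real.sqrt (∑ i, ∑ j, (A i j) ^ 2)

/-- `Ad` is the Moore–Penrose pseudoinverse of `A` (the four Penrose conditions). -/
def IsMoorePenrose {m n : ℕ} (A : Matrix (Fin m) (Fin n) ℝ)
    (Ad : Matrix (Fin n) (Fin m) ℝ) : Prop :=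
  A * Ad * A = A ∧ Ad * A * Ad = Ad ∧ (A * Ad)ᵀ = A * Ad ∧ (Ad * A)ᵀ = Ad * A

section Frobenius

variable {m n : ℕ}

lemma frob_nonneg (A : Matrix (Fin m) (Fin n) ℝ) : 0 ≤ frob A := Real.sqrt_nonneg _

lemma frob_sq (A : Matrix (Fin m) (Fin n) ℝ) : frob A ^ 2 = trace (A * Aᵀ) := by
  rw [frob, Real.sq_sqrt (by positivity)]
  simp [trace, mul_apply, sq]

lemma frob_sub_comm (A B : Matrix (Fin m) (Fin n) ℝ) : frob (A - B) = frob (B - A) := by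
  simp only [frob, Matrix.sub_apply, ← neg_sub (A _ _), neg_sq]

lemma frob_mul_le_of_isIdempotentElem (N : Matrix (Fin m) (Fin n) ℝ)
    {P : Matrix (Fin n) (Fin n) ℝ} (hPt : Pᵀ = P) (hPP : IsIdempotentElem P) :
    frob (N * P) ≤ frob N := by
  have hQQ : (1 - P) * (1 - P) = 1 - P := by
    rw [sub_mul, mul_sub, mul_sub, hPP]; simp
  have pythagoras : frob N ^ 2 = frob (N * P) ^ 2 + frob (N * (1 - P)) ^ 2 := by
    simp only [frob_sq, ← trace_add, transpose_mul, transpose_sub, transpose_one, hPt,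
      ← Matrix.mul_assoc]
    rw [Matrix.mul_assoc N P P, hPP, Matrix.mul_assoc N (1 - P), hQQ, ← Matrix.add_mul,
      ← Matrix.mul_add, add_sub_cancel, Matrix.mul_one]
  refine (pow_le_pow_iff_left₀ (frob_nonneg _) (frob_nonneg _) two_ne_zero).1 ?_
  nlinarith [sq_nonneg (frob (N * (1 - P)))]

end Frobenius

section SecondMoment

variable {Ω : Type} [MeasurableSpace Ω] {μ : Measure Ω} {n m : ℕ}
  {X : Ω → Fin n → ℝ} {Y : Ω → Fin m → ℝ}

lemma secondMoment_transpose : (secondMoment μ X Y)ᵀ = secondMoment μ Y X := by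
  ext i j; simp [secondMoment, mul_comm]

lemma integrable_apply_mul_apply (hX : MemLp X 2 μ) (hY : MemLp Y 2 μ) (i : Fin n) (j : Fin m) :
    Integrable (fun ω => X ω i * Y ω j) μ :=
  (hX.eval i).integrable_mul (hY.eval j)

lemma MeasureTheory.MemLp.mulVec {p : ENNReal} (hX : MemLp X p μ)
    (B : Matrix (Fin m) (Fin n) ℝ) :
    MemLp (fun ω => B *ᵥ X ω) p μ :=
  (LinearMap.toContinuousLinearMap (Matrix.toLin' B)).comp_memLp' hX

lemma secondMoment_mulVec_left (hX : MemLp X 2 μ) (hY : MemLp Y 2 μ) {k : ℕ}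
    (B : Matrix (Fin k) (Fin n) ℝ) :
    secondMoment μ (fun ω => B *ᵥ X ω) Y = B * secondMoment μ X Y := by
  ext i j
  simp only [secondMoment, of_apply, mul_apply, mulVec, dotProduct, Finset.sum_mul, mul_assoc]
  rw [integral_finsetSum _ fun l _ => (integrable_apply_mul_apply hX hY l j).const_mul _]
  simp only [integral_const_mul]

lemma secondMoment_mulVec (hX : MemLp X 2 μ) {k : ℕ} (B : Matrix (Fin k) (Fin n) ℝ) :
    secondMoment μ (fun ω => B *ᵥ X ω) (fun ω => B *ᵥ X ω)
      = B * secondMoment μ X X * Bᵀ := by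
  rw [secondMoment_mulVec_left hX (hX.mulVec B), ← secondMoment_transpose,
    secondMoment_mulVec_left hX hX, transpose_mul, secondMoment_transpose, Matrix.mul_assoc]

lemma integral_sum_sq_sub {Z : Ω → Fin n → ℝ} (hX : MemLp X 2 μ) (hZ : MemLp Z 2 μ) :
    ∫ ω, ∑ i, (X ω - Z ω) i ^ 2 ∂μ
      = trace (secondMoment μ X X) - 2 * trace (secondMoment μ X Z)
        + trace (secondMoment μ Z Z) := by
  have hXX := integrable_apply_mul_apply hX hX
  have hXZ := integrable_apply_mul_apply hX hZ
  have hZZ := integrable_apply_mul_apply hZ hZ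
  have expand : ∀ ω, ∑ i, (X ω - Z ω) i ^ 2
      = ∑ i, (X ω i * X ω i - 2 * (X ω i * Z ω i) + Z ω i * Z ω i) :=
    fun ω => Finset.sum_congr rfl fun i _ => by rw [Pi.sub_apply]; ring
  simp only [expand, trace, diag, secondMoment, of_apply, Finset.mul_sum,
    ← Finset.sum_sub_distrib, ← Finset.sum_add_distrib]
  have hXXZ : ∀ i, Integrable (fun ω => X ω i * X ω i - 2 * (X ω i * Z ω i)) μ :=
    fun i => (hXX i i).sub ((hXZ i i).const_mul 2)
  have hsummand : ∀ i,
      Integrable (fun ω => X ω i * X ω i - 2 * (X ω i * Z ω i) + Z ω i * Z ω i) μ :=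
    fun i => (hXXZ i).add (hZZ i i)
  rw [integral_finsetSum _ fun i _ => hsummand i]
  refine Finset.sum_congr rfl fun i _ => ?_
  rw [integral_add (hXXZ i) (hZZ i i), integral_sub (hXX i i) ((hXZ i i).const_mul 2),
    integral_const_mul]

lemma secondMoment_eq_zero_of_indepFun (hX : AEStronglyMeasurable X μ) (hY : Integrable Y μ)
    (hXY : ProbabilityTheory.IndepFun X Y μ) (hY₀ : ∫ ω, Y ω ∂μ = 0) :
    secondMoment μ X Y = 0 := by
  ext i j
  have hYj : ∫ ω, Y ω j ∂μ = 0 := by rw [← eval_integral hY.eval j, hY₀, Pi.zero_apply]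
  calc ∫ ω, X ω i * Y ω j ∂μ = (∫ ω, X ω i ∂μ) * ∫ ω, Y ω j ∂μ :=
        (hXY.comp (measurable_pi_apply i) (measurable_pi_apply j)).integral_fun_mul_eq_mul_integral
          ((continuous_apply i).comp_aestronglyMeasurable hX)
          ((continuous_apply j).comp_aestronglyMeasurable hY.aestronglyMeasurable)
    _ = 0 := by rw [hYj, mul_zero]

lemma integral_sum_sq_mulVec_sub (hX : MemLp X 2 μ) (hY : MemLp Y 2 μ)
    (hXY : secondMoment μ X Y = 0) (B : Matrix (Fin m) (Fin n) ℝ) :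
    ∫ ω, ∑ i, (B *ᵥ X ω - Y ω) i ^ 2 ∂μ
      = trace (B * secondMoment μ X X * Bᵀ) + trace (secondMoment μ Y Y) := by
  rw [integral_sum_sq_sub (hX.mulVec B) hY, secondMoment_mulVec hX,
    secondMoment_mulVec_left hX hY, hXY, Matrix.mul_zero, trace_zero, mul_zero, sub_zero]

end SecondMoment

theorem forward_end_to_end_optimal {Ω : Type} [MeasurableSpace Ω]
    (μ : Measure Ω) [IsProbabilityMeasure μ] {n m k r : ℕ}
    (X : Ω → Fin n → ℝ) (ε : Ω → Fin m → ℝ)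
    (hX : MemLp X 2 μ) (hε : MemLp ε 2 μ)
    (hindep : ProbabilityTheory.IndepFun X ε μ)
    (hmean : (∫ ω, ε ω ∂μ) = 0)
    (F : Matrix (Fin m) (Fin n) ℝ)
    (LX : Matrix (Fin n) (Fin k) ℝ) (hLX : secondMoment μ X X = LX * LXᵀ)
    (LXd : Matrix (Fin k) (Fin n) ℝ) (hLXd : IsMoorePenrose LX LXd)
    (M : Matrix (Fin m) (Fin k) ℝ)
    (hMrank : M.rank ≤ r)
    (hMbest : ∀ N : Matrix (Fin m) (Fin k) ℝ, N.rank ≤ r →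
      frob (F * LX - M) ≤ frob (F * LX - N)) :
    (M * LXd).rank ≤ r ∧
      ∀ A : Matrix (Fin m) (Fin n) ℝ, A.rank ≤ r →
        ∫ ω, ∑ i, ((M * LXd) *ᵥ X ω - (F *ᵥ X ω + ε ω)) i ^ 2 ∂μ
          ≤ ∫ ω, ∑ i, (A *ᵥ X ω - (F *ᵥ X ω + ε ω)) i ^ 2 ∂μ := by
  obtain ⟨hLX₁, hLX₂, -, hLX₄⟩ := hLXd
  have hXε := secondMoment_eq_zero_of_indepFun hX.aestronglyMeasurable
    (hε.integrable one_le_two) hindep hmean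
  have risk : ∀ B : Matrix (Fin m) (Fin n) ℝ,
      ∫ ω, ∑ i, (B *ᵥ X ω - (F *ᵥ X ω + ε ω)) i ^ 2 ∂μ
        = frob ((B - F) * LX) ^ 2 + trace (secondMoment μ ε ε) := fun B => by
    simp_rw [← sub_sub, ← sub_mulVec, integral_sum_sq_mulVec_sub hX hε hXε, hLX, frob_sq,
      transpose_mul, Matrix.mul_assoc]
  have hP : IsIdempotentElem (LXd * LX) := by
    rw [IsIdempotentElem, ← Matrix.mul_assoc, hLX₂]
  have hAhat : (M * LXd - F) * LX = (M - F * LX) * (LXd * LX) := by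
    rw [Matrix.sub_mul, Matrix.sub_mul, Matrix.mul_assoc M, Matrix.mul_assoc F,
      ← Matrix.mul_assoc LX, hLX₁]
  refine ⟨(rank_mul_le_left M LXd).trans hMrank, fun A hA => ?_⟩
  rw [risk, risk]
  refine add_le_add_left (pow_le_pow_left₀ (frob_nonneg _) ?_ 2) _
  calc frob ((M * LXd - F) * LX) = frob ((M - F * LX) * (LXd * LX)) := by rw [hAhat]
    _ ≤ frob (M - F * LX) := frob_mul_le_of_isIdempotentElem _ hLX₄ hP
    _ = frob (F * LX - M) := frob_sub_comm _ _
    _ ≤ frob (F * LX - A * LX) := hMbest _ ((rank_mul_le_left A LX).trans hA)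
    _ = frob ((A - F) * LX) := by rw [frob_sub_comm, Matrix.sub_mul]
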